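/- (Projection lower bound for nondecreasing tuples) Let Z be a set of nondecreasing ω-tuples from {1,...,n}, and let L = {j : j is a nondecreasing r-subtuple (subsequence) of some i ∈ Z}. Then |L| ≥ |Z|^{r/ω}. -/

import Mathlib

/-!
Deleting one coordinate maps the `(s + 1)`-subtuples of `Z` into its `s`-subtuples, so the
discrete Loomis–Whitney inequality `|Y| ^ s ≤ ∏ₖ |πₖ Y|` for `Y ⊆ α ^ (s + 1)` gives
`|L_{s+1}| ^ s ≤ |L_s| ^ (s + 1)`. Chaining these from `s = r` up to `s = ω`, where `Z ⊆ L_ω`,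
yields `|Z| ^ r ≤ |L_r| ^ ω`. Loomis–Whitney itself is proved by induction on the dimension:
slice `Y` along its last coordinate, apply the induction hypothesis to each slice and recombine
the slices with Hölder's inequality.
-/

open Finset MeasureTheory
open scoped ENNReal

theorem ENNReal.sum_prod_rpow_le_prod_sum_rpow {γ ι : Type*} (C : Finset γ) (K : Finset ι)
    (f : ι → γ → ℝ≥0∞) {p : ι → ℝ} (hp : ∑ k ∈ K, p k = 1) (hp₀ : ∀ k ∈ K, 0 ≤ p k) :
    ∑ c ∈ C, ∏ k ∈ K, f k c ^ p k ≤ ∏ k ∈ K, (∑ c ∈ C, f k c) ^ p k := by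
  let _ : MeasurableSpace γ := ⊤
  have := ENNReal.lintegral_prod_norm_pow_le (μ := Measure.count.restrict C) K
    (fun k _ => (measurable_from_top (f := f k)).aemeasurable) hp hp₀
  simpa [lintegral_finset] using this

theorem ENNReal.sum_pow_card_le_mul_prod_sum {γ ι : Type*} (C : Finset γ) {K : Finset ι}
    (hK : K.Nonempty) (A : ℝ≥0∞) (z : γ → ℝ≥0∞) (x : ι → γ → ℝ≥0∞)
    (h : ∀ c ∈ C, z c ^ #K ≤ A * ∏ k ∈ K, x k c) :
    (∑ c ∈ C, z c) ^ #K ≤ A * ∏ k ∈ K, ∑ c ∈ C, x k c := by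
  set t : ℝ := (#K : ℝ)⁻¹
  have ht : 0 < t := inv_pos.2 (by exact_mod_cast hK.card_pos)
  have pow_le_iff (y B : ℝ≥0∞) : y ^ #K ≤ B ↔ y ≤ B ^ t := by
    rw [ENNReal.le_rpow_inv_iff (by exact_mod_cast hK.card_pos), ENNReal.rpow_natCast]
  rw [pow_le_iff]
  calc ∑ c ∈ C, z c
      ≤ ∑ c ∈ C, A ^ t * ∏ k ∈ K, x k c ^ t := by
        refine sum_le_sum fun c hc => ?_
        rw [ENNReal.prod_rpow_of_nonneg ht.le, ← ENNReal.mul_rpow_of_nonneg _ _ ht.le]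
        exact (pow_le_iff _ _).1 (h c hc)
    _ = A ^ t * ∑ c ∈ C, ∏ k ∈ K, x k c ^ t := (mul_sum _ _ _).symm
    _ ≤ A ^ t * ∏ k ∈ K, (∑ c ∈ C, x k c) ^ t := by
        gcongr
        refine ENNReal.sum_prod_rpow_le_prod_sum_rpow C K x ?_ fun _ _ => ht.le
        rw [sum_const, nsmul_eq_mul, mul_inv_cancel₀ (by exact_mod_cast hK.card_pos.ne')]
    _ = (A * ∏ k ∈ K, ∑ c ∈ C, x k c) ^ t := by
        rw [ENNReal.mul_rpow_of_nonneg _ _ ht.le, ← ENNReal.prod_rpow_of_nonneg ht.le]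

theorem Fin.removeNth_castSucc_eq_snoc {α : Type*} {m : ℕ} (k : Fin (m + 1))
    (f : Fin (m + 2) → α) :
    removeNth k.castSucc f = snoc (removeNth k (init f)) (f (last _)) := by
  funext j
  induction j using Fin.lastCases with
  | last =>
    simp [removeNth_apply, succAbove_of_le_castSucc _ _ (castSucc_le_castSucc_iff.2 (le_last k))]
  | cast j => simp [removeNth_apply, init, castSucc_succAbove_castSucc]

section LoomisWhitney

variable {α : Type*} [DecidableEq α]

def lastSlice {m : ℕ} (Z : Finset (Fin (m + 1) → α)) (c : α) : Finset (Fin m → α) :=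
  {f ∈ Z | f (Fin.last m) = c}.image Fin.init

theorem card_eq_sum_card_lastSlice {m : ℕ} (Z : Finset (Fin (m + 1) → α)) :
    #Z = ∑ c ∈ Z.image (· (Fin.last m)), #(lastSlice Z c) := by
  refine (card_eq_sum_card_fiberwise (f := fun f : Fin (m + 1) → α => f (Fin.last m))
    fun f hf => mem_image_of_mem _ hf).trans
      (sum_congr rfl fun c _ => (card_image_of_injOn fun f hf g hg hfg => ?_).symm)
  rw [← Fin.snoc_init_self f, ← Fin.snoc_init_self g, hfg, (mem_filter.1 hf).2,
    (mem_filter.1 hg).2]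

theorem lastSlice_subset {m : ℕ} (Z : Finset (Fin (m + 1) → α)) (c : α) :
    lastSlice Z c ⊆ Z.image (Fin.removeNth (Fin.last m)) := by
  intro g hg
  obtain ⟨f, hf, rfl⟩ := mem_image.1 hg
  exact mem_image.2 ⟨f, (mem_filter.1 hf).1, Fin.removeNth_last f⟩

theorem lastSlice_nonempty {m : ℕ} {Z : Finset (Fin (m + 1) → α)} {c : α}
    (hc : c ∈ Z.image (· (Fin.last m))) : (lastSlice Z c).Nonempty := by
  obtain ⟨f, hf, rfl⟩ := mem_image.1 hc
  exact ⟨Fin.init f, mem_image_of_mem _ (mem_filter.2 ⟨hf, rfl⟩)⟩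

theorem sum_card_image_removeNth_lastSlice_le {m : ℕ} (Z : Finset (Fin (m + 2) → α))
    (k : Fin (m + 1)) :
    ∑ c ∈ Z.image (· (Fin.last _)), #((lastSlice Z c).image (Fin.removeNth k)) ≤
      #(Z.image (Fin.removeNth k.castSucc)) := by
  rw [← card_sigma]
  refine card_le_card_of_injOn (fun x => Fin.snoc x.2 x.1) (fun ⟨c, u⟩ hx => ?_) ?_
  · obtain ⟨-, hu⟩ := mem_sigma.1 hx
    obtain ⟨_, hg, hgu⟩ := mem_image.1 hu
    obtain ⟨f, hf, rfl⟩ := mem_image.1 hg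
    dsimp only at hf hgu ⊢
    rw [← (mem_filter.1 hf).2, ← hgu, ← Fin.removeNth_castSucc_eq_snoc]
    exact mem_image_of_mem _ (mem_filter.1 hf).1
  · rintro ⟨c, u⟩ - ⟨d, v⟩ - huv
    have hu := congrArg Fin.init huv
    have hc := congrArg (· (Fin.last _)) huv
    simp only [Fin.init_snoc, Fin.snoc_last] at hu hc
    subst hu hc
    rfl

theorem card_pow_le_prod_card_image_removeNth :
    ∀ {m : ℕ} (Z : Finset (Fin (m + 1) → α)), Z.Nonempty →
      #Z ^ m ≤ ∏ k, #(Z.image (Fin.removeNth k))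
  | 0, _, hZ => by simpa using hZ
  | m + 1, Z, hZ => by
    set T := Z.image (· (Fin.last _))
    set A := #(Z.image (Fin.removeNth (Fin.last _)))
    have slice_bound (c) (hc : c ∈ T) : #(lastSlice Z c) ^ (m + 1) ≤
        A * ∏ k : Fin (m + 1), #((lastSlice Z c).image (Fin.removeNth k)) := by
      rw [pow_succ']
      exact Nat.mul_le_mul (card_le_card (lastSlice_subset Z c))
        (card_pow_le_prod_card_image_removeNth _ (lastSlice_nonempty hc))
    have key : (#Z : ℝ≥0∞) ^ (m + 1) ≤
        A * ∏ k : Fin (m + 1), (#(Z.image (Fin.removeNth k.castSucc)) : ℝ≥0∞) := by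
      have holder := ENNReal.sum_pow_card_le_mul_prod_sum T (univ_nonempty (α := Fin (m + 1)))
        A (fun c => (#(lastSlice Z c) : ℝ≥0∞))
        (fun k c => (#((lastSlice Z c).image (Fin.removeNth k)) : ℝ≥0∞))
        fun c hc => by rw [card_univ, Fintype.card_fin]; exact_mod_cast slice_bound c hc
      rw [card_univ, Fintype.card_fin, ← Nat.cast_sum, ← card_eq_sum_card_lastSlice] at holder
      refine holder.trans (mul_le_mul_right (prod_le_prod' fun k _ => ?_) _)
      rw [← Nat.cast_sum]
      exact Nat.cast_le.2 (sum_card_image_removeNth_lastSlice_le Z k)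
    calc #Z ^ (m + 1) ≤ A * ∏ k : Fin (m + 1), #(Z.image (Fin.removeNth k.castSucc)) := by
          exact_mod_cast key
      _ = ∏ k, #(Z.image (Fin.removeNth k)) := by
        rw [Fin.prod_univ_castSucc (fun k : Fin (m + 2) => #(Z.image (Fin.removeNth k))), mul_comm]

theorem card_pow_le_card_pow_succ_of_image_removeNth_subset {r : ℕ} (hr : r ≠ 0)
    {Y : Finset (Fin (r + 1) → α)} {W : Finset (Fin r → α)}
    (hYW : ∀ k, Y.image (Fin.removeNth k) ⊆ W) : #Y ^ r ≤ #W ^ (r + 1) := by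
  rcases Y.eq_empty_or_nonempty with rfl | hY
  · simp [zero_pow hr]
  calc #Y ^ r ≤ ∏ k, #(Y.image (Fin.removeNth k)) := card_pow_le_prod_card_image_removeNth Y hY
    _ ≤ ∏ _k : Fin (r + 1), #W := prod_le_prod' fun k _ => card_le_card (hYW k)
    _ = #W ^ (r + 1) := by simp

end LoomisWhitney

theorem Nat.pow_le_pow_of_pow_le_pow_of_pow_le_pow {a b c x y u : ℕ} (hx : x ≠ 0)
    (hab : a ^ x ≤ b ^ y) (hbc : b ^ u ≤ c ^ x) : a ^ u ≤ c ^ y := by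
  refine (Nat.pow_le_pow_iff_left hx).1 ?_
  calc (a ^ u) ^ x = (a ^ x) ^ u := by rw [← pow_mul, ← pow_mul, mul_comm]
    _ ≤ (b ^ y) ^ u := Nat.pow_le_pow_left hab u
    _ = (b ^ u) ^ y := by rw [← pow_mul, ← pow_mul, mul_comm]
    _ ≤ (c ^ x) ^ y := Nat.pow_le_pow_left hbc y
    _ = (c ^ y) ^ x := by rw [← pow_mul, ← pow_mul, mul_comm]

section Subtuples

variable {α : Type*} {m : ℕ}

open Classical in
noncomputable def subtuples (r : ℕ) (Z : Finset (Fin m → α)) : Finset (Fin r → α) :=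
  Z.biUnion fun i => ({s | StrictMono s} : Finset (Fin r → Fin m)).image (i ∘ ·)

theorem mem_subtuples {r : ℕ} {Z : Finset (Fin m → α)} {w : Fin r → α} :
    w ∈ subtuples r Z ↔ ∃ i ∈ Z, ∃ s : Fin r → Fin m, StrictMono s ∧ w = i ∘ s := by
  simp [subtuples, eq_comm]

theorem coe_subtuples (r : ℕ) (Z : Finset (Fin m → α)) :
    (subtuples r Z : Set (Fin r → α)) =
      {w | ∃ i ∈ Z, ∃ s : Fin r → Fin m, StrictMono s ∧ w = i ∘ s} :=
  Set.ext fun _ => mem_subtuples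

theorem subset_subtuples_self (Z : Finset (Fin m → α)) : Z ⊆ subtuples m Z :=
  fun i hi => mem_subtuples.2 ⟨i, hi, id, strictMono_id, rfl⟩

theorem image_removeNth_subtuples_subset [DecidableEq α] (r : ℕ) (Z : Finset (Fin m → α))
    (k : Fin (r + 1)) :
    (subtuples (r + 1) Z).image (Fin.removeNth k) ⊆ subtuples r Z := by
  intro w hw
  obtain ⟨f, hf, rfl⟩ := mem_image.1 hw
  obtain ⟨i, hi, s, hs, rfl⟩ := mem_subtuples.1 hf
  exact mem_subtuples.2 ⟨i, hi, s ∘ k.succAbove, hs.comp k.strictMono_succAbove, rfl⟩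

theorem card_subtuples_succ_pow_le {r : ℕ} (hr : r ≠ 0) (Z : Finset (Fin m → α)) :
    #(subtuples (r + 1) Z) ^ r ≤ #(subtuples r Z) ^ (r + 1) := by
  classical
  exact card_pow_le_card_pow_succ_of_image_removeNth_subset hr
    (image_removeNth_subtuples_subset r Z)

theorem card_subtuples_pow_le {r s : ℕ} (hr : r ≠ 0) (hrs : r ≤ s) (Z : Finset (Fin m → α)) :
    #(subtuples s Z) ^ r ≤ #(subtuples r Z) ^ s := by
  induction s, hrs using Nat.le_induction with
  | base => rfl
  | succ s hrs ih =>
    exact Nat.pow_le_pow_of_pow_le_pow_of_pow_le_pow (by omega)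
      (card_subtuples_succ_pow_le (by omega) Z) ih

end Subtuples

theorem projection_lower_bound_monotone_general (om r n : ℕ) (hr : 1 ≤ r) (hrom : r ≤ om)
    (Z : Finset (Fin om → Fin n)) :
    Z.card ^ r ≤
      (Set.ncard {w : Fin r → Fin n |
        ∃ i ∈ Z, ∃ s : Fin r → Fin om, StrictMono s ∧ w = i ∘ s}) ^ om := by
  rw [← coe_subtuples, Set.ncard_coe_finset]
  calc #Z ^ r ≤ #(subtuples om Z) ^ r :=
        Nat.pow_le_pow_left (card_le_card (subset_subtuples_self Z)) r
    _ ≤ #(subtuples r Z) ^ om := card_subtuples_pow_le (by omega) hrom Z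

/-- Projection lower bound for nondecreasing tuples: if Z is a set of
nondecreasing ω-tuples and L the set of their nondecreasing r-subtuples
(subsequences), then |Z|^r ≤ |L|^ω, i.e. |L| ≥ |Z|^{r/ω}. -/
theorem projection_lower_bound_monotone (om r n : ℕ) (hr : 1 ≤ r) (hrom : r ≤ om)
    (Z : Finset (Fin om → Fin n)) (hZ : ∀ i ∈ Z, Monotone i) :
    Z.card ^ r ≤
      (Set.ncard {w : Fin r → Fin n |
        ∃ i ∈ Z, ∃ s : Fin r → Fin om, StrictMono s ∧ w = i ∘ s}) ^ om :=
  projection_lower_bound_monotone_general om r n hr hrom Z
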